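/- arXiv:1303.5021 — 3 statements merged into one kernel-verified Lean document; each statement's English description precedes it below -/
import Mathlib

section
/- Every w ∈ W_n has an ascending representative in its equivalence class: there exists an ascending w̃ ∈ W_n with w ∼ w̃, where ∼ is the equivalence relation generated by left and right admissible operators. -/
open scoped BigOperators

/-!
Common definitions: the complex reflection group `G(r,1,n)` recorded in one-line
notation, its one-dimensional representations, the generalized Robinson–Schensted
map to pairs of `r`-multitableaux, and the associated tableau statistics.
-/

/-- An element of `W_n = G(r,1,n)` in one-line notation
`w = [ζ^{a 0} σ 0, …, ζ^{a (n-1)} σ (n-1)]`: the nonzero entry of column `i`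
is `ζ ^ (a i)` and lies in row `σ i`. -/
@[ext]
structure GW (r n : ℕ) where
  a : Fin n → ZMod r
  σ : Equiv.Perm (Fin n)

namespace GW

variable {r n : ℕ}

instance : Mul (GW r n) := ⟨fun w v => ⟨fun j => w.a (v.σ j) + v.a j, w.σ * v.σ⟩⟩
instance : One (GW r n) := ⟨⟨fun _ => 0, 1⟩⟩
instance : Inv (GW r n) := ⟨fun w => ⟨fun j => -(w.a (w.σ⁻¹ j)), w.σ⁻¹⟩⟩

@[simp] lemma mul_a (w v : GW r n) (j : Fin n) : (w * v).a j = w.a (v.σ j) + v.a j := rfl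
@[simp] lemma mul_sigma (w v : GW r n) : (w * v).σ = w.σ * v.σ := rfl
@[simp] lemma one_a (j : Fin n) : (1 : GW r n).a j = 0 := rfl
@[simp] lemma one_sigma : (1 : GW r n).σ = 1 := rfl
@[simp] lemma inv_a (w : GW r n) (j : Fin n) : (w⁻¹).a j = -(w.a (w.σ⁻¹ j)) := rfl
@[simp] lemma inv_sigma (w : GW r n) : (w⁻¹).σ = w.σ⁻¹ := rfl

instance : Group (GW r n) where
  mul_assoc w v u := by
    ext j
    · simp [Equiv.Perm.mul_apply, add_assoc]
    · simp [mul_assoc]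
  one_mul w := by ext j <;> simp
  mul_one w := by ext j <;> simp
  inv_mul_cancel w := by
    ext j
    · simp
    · simp

end GW

/-- `ζ = exp(2π√-1 / r)`, a primitive `r`-th root of unity. -/
noncomputable def zeta (r : ℕ) : ℂ := Complex.exp (2 * Real.pi * Complex.I / r)

/-- The one-dimensional representation `sgn_i` of `W_n = G(r,1,n)`:
`sgn_i w = ζ^{i (a_1 + ⋯ + a_n)} ⬝ sgn σ`. -/
noncomputable def sgnRep (r n : ℕ) (i : ℕ) (w : GW r n) : ℂ :=
  zeta r ^ (i * ∑ j, (w.a j).val) * ((Equiv.Perm.sign w.σ : ℤ) : ℂ)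

/-- A tableau, recorded as its list of rows of labels. -/
abbrev Tab := List (List ℕ)

/-- Robinson–Schensted row insertion of the value `x` into a tableau. -/
def rowInsert : ℕ → Tab → Tab
  | x, [] => [[x]]
  | x, row :: rest =>
    if h : row.findIdx (fun y => decide (x < y)) < row.length then
      row.set (row.findIdx (fun y => decide (x < y))) x ::
        rowInsert (row.get ⟨row.findIdx (fun y => decide (x < y)), h⟩) rest
    else (row ++ [x]) :: rest

/-- The shape of a tableau: its list of row lengths. -/
def shape (T : Tab) : List ℕ := T.map List.length

/-- Append the label `lab` at the end of row `i` of the (recording) tableau `Q`. -/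
def place (Q : Tab) (i lab : ℕ) : Tab :=
  if i < Q.length then Q.set i ((Q.getD i []) ++ [lab]) else Q ++ [[lab]]

/-- One step of the Robinson–Schensted algorithm: insert the value `x` into the
insertion tableau and record the label `lab` in the new box of the recording
tableau. -/
def RSstep : Tab × Tab → ℕ × ℕ → Tab × Tab := fun PQ xl =>
  let P' := rowInsert xl.1 PQ.1
  let i := (List.range P'.length).findIdx
    (fun i => decide ((PQ.1.getD i []).length < (P'.getD i []).length))
  (P', place PQ.2 i xl.2)

/-- The classical Robinson–Schensted correspondence applied to a word of
(value, label) pairs, producing the insertion and recording tableaux. -/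
def RSword (word : List (ℕ × ℕ)) : Tab × Tab := word.foldl RSstep ([], [])

/-- The positions `i` (in increasing order) whose attached exponent `a i` equals `k`. -/
def labelIdx {r n : ℕ} (w : GW r n) (k : ℕ) : List (Fin n) :=
  (List.finRange n).filter (fun i => decide ((w.a i).val = k))

/-- The word `w^(k)` together with its recording labels: the values `σ i` (1-based)
attached to the positions `i` (1-based) with `a i = k`, in increasing order of `i`. -/
def wordPairs {r n : ℕ} (w : GW r n) (k : ℕ) : List (ℕ × ℕ) :=
  (labelIdx w k).map (fun i => ((w.σ i : ℕ) + 1, (i : ℕ) + 1))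

/-- The insertion multitableau `P(w)` of the generalized Robinson–Schensted map. -/
def Ptab {r n : ℕ} (w : GW r n) : Fin r → Tab := fun k => (RSword (wordPairs w k)).1

/-- The recording multitableau `Q(w)` of the generalized Robinson–Schensted map. -/
def Qtab {r n : ℕ} (w : GW r n) : Fin r → Tab := fun k => (RSword (wordPairs w k)).2

/-- The set of labels of a tableau. -/
def labels (T : Tab) : Finset ℕ := T.flatten.toFinset

/-- The (0-based) index of the row of `T` containing the label `x`. -/
def rowOf (T : Tab) (x : ℕ) : ℕ := T.findIdx (fun row => decide (x ∈ row))

/-- The number of inversions of a tableau: pairs `(i, j)` with `i < j` and the box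
labeled `i` in a row strictly below the box labeled `j`. -/
def invTab (T : Tab) : ℕ :=
  ((labels T ×ˢ labels T).filter (fun p => p.1 < p.2 ∧ rowOf T p.2 < rowOf T p.1)).card

/-- `crossInv S T` is the number of pairs `(j, i)` with `j > i`, `j` a label of `S`
and `i` a label of `T`, i.e. the cardinality of `Inv(S, T)`. -/
def crossInv (S T : Tab) : ℕ :=
  ((labels S ×ˢ labels T).filter (fun p => p.2 < p.1)).card

/-- The number of inversions of a multitableau. -/
def invMulti {r : ℕ} (T : Fin r → Tab) : ℕ :=
  (∑ k, invTab (T k)) + ∑ k, ∑ l, if k < l then crossInv (T k) (T l) else 0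

/-- The sign `(-1)^{inv T}` of a multitableau. -/
def signMulti {r : ℕ} (T : Fin r → Tab) : ℂ := (-1) ^ invMulti T

/-- The number of boxes in the even-indexed rows (1-based indexing) of a tableau. -/
def eTab (T : Tab) : ℕ :=
  ∑ i ∈ Finset.range T.length, if i % 2 = 1 then (T.getD i []).length else 0

/-- The total number of boxes in the even-indexed rows of a multitableau. -/
def eMulti {r : ℕ} (T : Fin r → Tab) : ℕ := ∑ k, eTab (T k)

/-- The number of boxes of a tableau. -/
def sizeTab (T : Tab) : ℕ := T.flatten.length

/-- `2 ⬝ spin T = Σ_k k ⬝ |sh(T_k)|`. -/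
def twoSpin {r : ℕ} (T : Fin r → Tab) : ℕ := ∑ k : Fin r, (k : ℕ) * sizeTab (T k)

/-- The spin statistic `spin T = (1/2) Σ_k k ⬝ |sh(T_k)|`. -/
def spin {r : ℕ} (T : Fin r → Tab) : ℚ := (twoSpin T : ℚ) / 2

/-- The function `π_i(w) = (-1)^{e(P)} (ζ^i)^{spin P + spin Q} sign(P) sign(Q)`
where `(P, Q) = RS(w)`. -/
noncomputable def piStat (r n : ℕ) (i : ℕ) (w : GW r n) : ℂ :=
  (-1) ^ eMulti (Ptab w) *
    (zeta r ^ i) ^ (((spin (Ptab w) + spin (Qtab w) : ℚ) : ℂ)) *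
    signMulti (Ptab w) * signMulti (Qtab w)

/-- `T` is a standard Young `r`-multitableau of rank `n`: each component consists of
nonempty rows of weakly decreasing lengths, labels strictly increase along rows and
down columns, and the labels used are exactly `1, …, n`, each exactly once. -/
def IsStandardMulti (r n : ℕ) (T : Fin r → Tab) : Prop :=
  (∀ k : Fin r,
      (∀ row ∈ T k, row ≠ [] ∧ List.Chain' (· < ·) row) ∧
      List.Chain' (fun r1 r2 => r2.length ≤ r1.length ∧
        ∀ j < r2.length, r1.getD j 0 < r2.getD j 0) (T k)) ∧
  (∑ k : Fin r, ((T k).flatten : Multiset ℕ)) = (Finset.Icc 1 n).val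

/-- A multitableau is ascending if every label of `T k` is smaller than every label
of `T (k+1)`. -/
def AscendingMulti {r : ℕ} (T : Fin r → Tab) : Prop :=
  ∀ (k : ℕ) (h : k + 1 < r),
    ∀ x ∈ labels (T ⟨k, by omega⟩), ∀ y ∈ labels (T ⟨k + 1, h⟩), x < y

/-- An element `w ∈ W_n` is ascending if its exponents increase weakly and, for each
`k < r - 1`, every element of the word `w^(k)` is smaller than every element of
`w^(k+1)`. -/
def AscendingElem {r n : ℕ} (w : GW r n) : Prop :=
  (∀ i j : Fin n, i ≤ j → (w.a i).val ≤ (w.a j).val) ∧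
  ∀ k : ℕ, k + 1 < r →
    ∀ x ∈ (wordPairs w k).map Prod.fst, ∀ y ∈ (wordPairs w (k + 1)).map Prod.fst, x < y

/-- The generator `s_0 = [ζ·1, 2, …, n]`. -/
def s0El (r n : ℕ) : GW r n := ⟨fun i => if (i : ℕ) = 0 then 1 else 0, 1⟩

/-- The generator `s_j` (for `1 ≤ j ≤ n - 1`): the permutation matrix of the
transposition interchanging `j` and `j + 1` (1-based values). -/
def sEl (r n : ℕ) (j : ℕ) (h1 : 1 ≤ j) (h2 : j + 1 ≤ n) : GW r n :=
  ⟨fun _ => 0, Equiv.swap ⟨j - 1, by omega⟩ ⟨j, by omega⟩⟩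

/-- The left operator `L_j(w) = s_j ⬝ w`. -/
def Lop {r n : ℕ} (w : GW r n) (j : ℕ) (h1 : 1 ≤ j) (h2 : j + 1 ≤ n) : GW r n :=
  sEl r n j h1 h2 * w

/-- The right operator `R_j(w) = w ⬝ s_j`. -/
def Rop {r n : ℕ} (w : GW r n) (j : ℕ) (h1 : 1 ≤ j) (h2 : j + 1 ≤ n) : GW r n :=
  w * sEl r n j h1 h2

/-- `L_j` is left admissible for `w`: the exponents attached to the entries with
values `j` and `j+1` differ. -/
def LeftAdm {r n : ℕ} (w : GW r n) (j : ℕ) (h1 : 1 ≤ j) (h2 : j + 1 ≤ n) : Prop :=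
  w.a (w.σ⁻¹ ⟨j - 1, by omega⟩) ≠ w.a (w.σ⁻¹ ⟨j, by omega⟩)

/-- `R_j` is right admissible for `w`: the exponents in positions `j` and `j+1`
differ, i.e. `a_j ≠ a_{j+1}`. -/
def RightAdm {r n : ℕ} (w : GW r n) (j : ℕ) (h1 : 1 ≤ j) (h2 : j + 1 ≤ n) : Prop :=
  w.a ⟨j - 1, by omega⟩ ≠ w.a ⟨j, by omega⟩

/-- A single admissible transformation: `w ↦ L_j(w)` for a left admissible `L_j`,
or `w ↦ R_j(w)` for a right admissible `R_j`. -/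
inductive AdmStep (r n : ℕ) : GW r n → GW r n → Prop
  | left (w : GW r n) (j : ℕ) (h1 : 1 ≤ j) (h2 : j + 1 ≤ n)
      (ha : LeftAdm w j h1 h2) : AdmStep r n w (Lop w j h1 h2)
  | right (w : GW r n) (j : ℕ) (h1 : 1 ≤ j) (h2 : j + 1 ≤ n)
      (ha : RightAdm w j h1 h2) : AdmStep r n w (Rop w j h1 h2)

/-!
Bubble sort, twice. A right admissible move swaps two adjacent positions carrying different
exponents, so right moves sort the exponents `a_1, …, a_n` into weakly increasing order. A left
admissible move keeps every `a_i` and swaps two adjacent values whose attached exponents differ, so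
left moves then sort the exponents attached to the values `1, …, n`. An element for which both
sequences are weakly increasing is ascending. Swapping an adjacent descent of `g : Fin n → ℕ`
strictly decreases `∑ₖ (n - 1 - k) g k`, so each sort terminates.
-/

section BubbleSort

variable {n : ℕ}

def revMoment (g : Fin n → ℕ) : ℕ := ∑ k, (k.rev : ℕ) * g k

lemma revMoment_comp_swap_lt {g : Fin n → ℕ} {i j : Fin n} (hij : i < j) (hg : g j < g i) :
    revMoment (g ∘ Equiv.swap i j) < revMoment g := by
  unfold revMoment
  zify
  rw [← sub_pos, ← Finset.sum_sub_distrib,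
    Finset.sum_eq_add i j hij.ne (fun k _ hk => by simp [Equiv.swap_apply_of_ne_of_ne hk.1 hk.2])
      (by simp) (by simp)]
  have hij' : (i : ℕ) < j := hij
  simp only [Function.comp_apply, Equiv.swap_apply_left, Equiv.swap_apply_right, Fin.val_rev]
  push_cast [show (i : ℕ) + 1 ≤ n by omega, show (j : ℕ) + 1 ≤ n by omega]
  nlinarith

lemma Fin.exists_succ_lt_of_not_monotone {α : Type*} [LinearOrder α] {g : Fin n → α}
    (hg : ¬Monotone g) : ∃ i j : Fin n, (j : ℕ) = i + 1 ∧ g j < g i := by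
  cases n with
  | zero => exact absurd (fun i => i.elim0) hg
  | succ m =>
    rw [Fin.monotone_iff_le_succ] at hg
    push Not at hg
    obtain ⟨i, hi⟩ := hg
    exact ⟨i.castSucc, i.succ, rfl, hi⟩

theorem exists_reflTransGen_monotone {X : Type*} {R : X → X → Prop} {P : X → Prop}
    (f : X → Fin n → ℕ)
    (hswap : ∀ x, P x → ∀ i j : Fin n, (j : ℕ) = i + 1 → f x j < f x i →
      ∃ y, R x y ∧ P y ∧ f y = f x ∘ Equiv.swap i j)
    (x : X) (hx : P x) : ∃ y, Relation.ReflTransGen R x y ∧ P y ∧ Monotone (f y) := by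
  induction hm : revMoment (f x) using Nat.strong_induction_on generalizing x with
  | _ m ih =>
  by_cases hmono : Monotone (f x)
  · exact ⟨x, .refl, hx, hmono⟩
  obtain ⟨i, j, hij, hdesc⟩ := Fin.exists_succ_lt_of_not_monotone hmono
  obtain ⟨y, hxy, hy, hfy⟩ := hswap x hx i j hij hdesc
  have hlt : revMoment (f y) < m :=
    hm ▸ hfy ▸ revMoment_comp_swap_lt (Fin.lt_def.2 (by omega)) hdesc
  obtain ⟨z, hyz, hz, hmz⟩ := ih _ hlt y hy rfl
  exact ⟨z, .head hxy hyz, hz, hmz⟩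

end BubbleSort

namespace GW

variable {r n : ℕ}

def valueExp (w : GW r n) (v : Fin n) : ZMod r := w.a (w.σ⁻¹ v)

@[simp] lemma valueExp_sigma (w : GW r n) (i : Fin n) : w.valueExp (w.σ i) = w.a i := by
  simp [valueExp]

lemma exists_admStep_right {w : GW r n} {i j : Fin n} (hij : (j : ℕ) = i + 1)
    (hne : w.a i ≠ w.a j) : ∃ w', AdmStep r n w w' ∧ w'.a = w.a ∘ Equiv.swap i j := by
  obtain ⟨i, hi⟩ := i
  obtain ⟨j, hj⟩ := j
  obtain rfl : j = i + 1 := hij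
  refine ⟨_, .right w (i + 1) (by omega) hj hne, ?_⟩
  funext k
  simp [Rop, sEl]

lemma exists_admStep_left {w : GW r n} {i j : Fin n} (hij : (j : ℕ) = i + 1)
    (hne : w.valueExp i ≠ w.valueExp j) :
    ∃ w', AdmStep r n w w' ∧ w'.a = w.a ∧ w'.valueExp = w.valueExp ∘ Equiv.swap i j := by
  obtain ⟨i, hi⟩ := i
  obtain ⟨j, hj⟩ := j
  obtain rfl : j = i + 1 := hij
  refine ⟨_, .left w (i + 1) (by omega) hj hne, ?_, ?_⟩ <;> funext k
  · simp [Lop, sEl]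
  · simp [Lop, sEl, valueExp, Equiv.swap_inv]

lemma ascendingElem_of_monotone {w : GW r n} (ha : Monotone fun i => (w.a i).val)
    (hv : Monotone fun v => (w.valueExp v).val) : AscendingElem w := by
  refine ⟨ha, fun k _ x hx y hy => ?_⟩
  simp only [wordPairs, labelIdx, List.map_map, List.mem_map, List.mem_filter,
    List.mem_finRange, true_and, Function.comp_apply, decide_eq_true_eq] at hx hy
  obtain ⟨i, hi, rfl⟩ := hx
  obtain ⟨j, hj, rfl⟩ := hy
  have hlt : w.σ i < w.σ j := hv.reflect_lt (by simp [hi, hj])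
  exact Nat.add_lt_add_right hlt 1

end GW

theorem exists_ascending_representative_general (r n : ℕ) (w : GW r n) :
    ∃ wt : GW r n, AscendingElem wt ∧ Relation.EqvGen (AdmStep r n) w wt := by
  obtain ⟨w₁, h₁, -, ha₁⟩ := exists_reflTransGen_monotone (R := AdmStep r n) (P := fun _ => True)
    (fun w i => (w.a i).val) (fun w _ i j hij hlt => by
      obtain ⟨w', hstep, ha'⟩ := GW.exists_admStep_right hij (hlt.ne' ∘ congrArg ZMod.val)
      exact ⟨w', hstep, trivial, ha' ▸ rfl⟩) w trivial
  obtain ⟨w₂, h₂, ha₂, hv₂⟩ := exists_reflTransGen_monotone (R := AdmStep r n)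
    (P := fun w => Monotone fun i => (w.a i).val)
    (fun w v => (w.valueExp v).val) (fun w ha i j hij hlt => by
      obtain ⟨w', hstep, ha', hv'⟩ := GW.exists_admStep_left hij (hlt.ne' ∘ congrArg ZMod.val)
      exact ⟨w', hstep, ha' ▸ ha, hv' ▸ rfl⟩) w₁ ha₁
  exact ⟨w₂, GW.ascendingElem_of_monotone ha₂ hv₂,
    Relation.EqvGen.reflTransGen_le_eqvGen _ _ _ (h₁.trans h₂)⟩

/-- **Proposition.** Every `w ∈ W_n` has an ascending representative in its
equivalence class under the relation generated by left and right admissible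
operators. -/
theorem exists_ascending_representative (r n : ℕ) (hr : 1 ≤ r) (hn : 1 ≤ n)
    (w : GW r n) :
    ∃ wt : GW r n, AscendingElem wt ∧ Relation.EqvGen (AdmStep r n) w wt :=
  exists_ascending_representative_general r n w
end

section
/- Let w ∈ W_n. If R_i is right admissible for w, then P(R_i(w)) = P(w); and if L_i is left admissible for w, then Q(L_i(w)) = Q(w). -/
open scoped BigOperators

/-!
Both operators only permute data that the Robinson–Schensted map treats as unrelated.
`R_j` swaps the adjacent positions `j, j+1`; when their exponents differ they lie in different
words `w^(k)`, so every word keeps its sequence of values and only its recording labels move,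
while the insertion tableau depends on the values alone. `L_j` swaps the values `j, j+1`; when
their exponents differ no word contains both, so on each word the swap preserves the order of
values. Row insertion only compares values, so it commutes with such a relabelling: the
insertion tableau is relabelled and the recording tableau does not change.
-/

open Equiv (swap)

theorem strictMonoOn_swap_of_covBy {α : Type*} [LinearOrder α] {a b : α} (hab : a ⋖ b)
    {s : Set α} (hs : ¬(a ∈ s ∧ b ∈ s)) : StrictMonoOn (swap a b) s := by
  intro x hx y hy hxy
  have hb : ∀ c, a < c → b ≤ c := fun _ h => hab.ge_of_gt h
  have ha : ∀ c, c < b → c ≤ a := fun _ h => hab.le_of_lt h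
  have hlt := hab.lt
  rw [Equiv.swap_apply_def, Equiv.swap_apply_def]
  split_ifs <;> subst_vars <;> grind

theorem List.findIdx_congr {α : Type*} {p q : α → Bool} {l : List α}
    (h : ∀ x ∈ l, p x = q x) : l.findIdx p = l.findIdx q := by
  induction l with
  | nil => rfl
  | cons a l ih =>
    simp only [List.findIdx_cons, h a List.mem_cons_self,
      ih fun x hx => h x (List.mem_cons_of_mem a hx)]

section RobinsonSchensted

theorem rowInsert_flatten_subset (x : ℕ) (T : Tab) :
    (rowInsert x T).flatten ⊆ x :: T.flatten := by
  induction T generalizing x with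
  | nil => simp [rowInsert]
  | cons row rest ih =>
    rw [rowInsert]
    split_ifs with h
    · intro v hv
      simp only [List.flatten_cons, List.mem_append, List.mem_cons] at hv ⊢
      rcases hv with hv | hv
      · rcases List.mem_or_eq_of_mem_set hv with hv | hv <;> simp [hv]
      · rcases List.mem_cons.1 (ih _ hv) with rfl | hv <;> simp [hv]
    · intro v hv
      simp only [List.flatten_cons, List.mem_append, List.mem_cons, List.not_mem_nil] at hv ⊢
      tauto

variable {S : Set ℕ} {f : ℕ → ℕ}

theorem rowInsert_map_of_strictMonoOn (hf : StrictMonoOn f S) {x : ℕ} {T : Tab}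
    (hx : x ∈ S) (hT : ∀ v ∈ T.flatten, v ∈ S) :
    rowInsert (f x) (T.map (List.map f)) = (rowInsert x T).map (List.map f) := by
  induction T generalizing x with
  | nil => rfl
  | cons row rest ih =>
    have hrow : ∀ v ∈ row, v ∈ S := fun v hv => hT v (by simp [hv])
    have hrest : ∀ v ∈ rest.flatten, v ∈ S := fun v hv => hT v (by simp [hv])
    have hidx : (row.map f).findIdx (fun y => decide (f x < y))
        = row.findIdx (fun y => decide (x < y)) := by
      rw [List.findIdx_map]
      exact List.findIdx_congr fun y hy => by
        simp [hf.lt_iff_lt hx (hrow y hy)]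
    simp only [List.map_cons, rowInsert, hidx, List.length_map]
    split_ifs with h
    · simp only [List.get_eq_getElem, List.getElem_map, List.map_cons, List.map_set]
      rw [ih (hrow _ (List.getElem_mem h)) hrest]
    · simp

theorem RSstep_map_of_strictMonoOn (hf : StrictMonoOn f S) {P Q : Tab} {x lab : ℕ}
    (hx : x ∈ S) (hP : ∀ v ∈ P.flatten, v ∈ S) :
    RSstep (P.map (List.map f), Q) (f x, lab)
      = Prod.map (List.map (List.map f)) id (RSstep (P, Q) (x, lab)) := by
  have hlen : ∀ (T : Tab) i, ((T.map (List.map f)).getD i []).length = (T.getD i []).length := by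
    intro T i
    simp only [List.getD_eq_getElem?_getD, List.getElem?_map]
    cases T[i]? <;> simp
  simp only [RSstep, rowInsert_map_of_strictMonoOn hf hx hP, List.length_map, hlen,
    Prod.map, id]

theorem foldl_RSstep_map_of_strictMonoOn (hf : StrictMonoOn f S) {word : List (ℕ × ℕ)}
    (hword : ∀ p ∈ word, p.1 ∈ S) {P Q : Tab} (hP : ∀ v ∈ P.flatten, v ∈ S) :
    (word.map (Prod.map f id)).foldl RSstep (P.map (List.map f), Q)
      = Prod.map (List.map (List.map f)) id (word.foldl RSstep (P, Q)) := by
  induction word generalizing P Q with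
  | nil => rfl
  | cons p word ih =>
    have hp : p.1 ∈ S := hword p List.mem_cons_self
    have hP' : ∀ v ∈ (RSstep (P, Q) p).1.flatten, v ∈ S := fun v hv =>
      (List.mem_cons.1 (rowInsert_flatten_subset p.1 P hv)).elim (· ▸ hp) (hP v)
    simp only [List.map_cons, List.foldl_cons]
    rw [Prod.map_apply, id, RSstep_map_of_strictMonoOn hf hp hP]
    exact ih (fun q hq => hword q (List.mem_cons_of_mem p hq)) hP'

theorem RSword_map_of_strictMonoOn {word : List (ℕ × ℕ)}
    (hf : StrictMonoOn f {x | x ∈ word.map Prod.fst}) :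
    RSword (word.map (Prod.map f id)) = Prod.map (List.map (List.map f)) id (RSword word) :=
  foldl_RSstep_map_of_strictMonoOn (P := []) hf (fun p hp => List.mem_map_of_mem hp) (by simp)

theorem foldl_RSstep_fst (word : List (ℕ × ℕ)) (PQ : Tab × Tab) :
    (word.foldl RSstep PQ).1 = (word.map Prod.fst).foldl (fun P x => rowInsert x P) PQ.1 := by
  induction word generalizing PQ with
  | nil => rfl
  | cons p word ih => exact ih _

theorem RSword_fst_congr {word word' : List (ℕ × ℕ)}
    (h : word.map Prod.fst = word'.map Prod.fst) : (RSword word).1 = (RSword word').1 := by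
  rw [RSword, RSword, foldl_RSstep_fst, foldl_RSstep_fst, h]

end RobinsonSchensted

theorem map_swap_filter_finRange {n : ℕ} {a b : Fin n} (hab : a ⋖ b) {p : Fin n → Bool}
    (hp : ¬(p a ∧ p b)) :
    ((List.finRange n).filter (p ∘ swap a b)).map (swap a b) = (List.finRange n).filter p := by
  have hmono : StrictMonoOn (swap a b) {x | p (swap a b x)} :=
    strictMonoOn_swap_of_covBy hab (by simpa [and_comm] using hp)
  -- both sides are strictly increasing lists with the same members
  refine List.Pairwise.eq_of_mem_iff (r := (· < ·)) ?_
    ((List.pairwise_lt_finRange n).filter p) fun x => ?_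
  · refine List.pairwise_map.2 (((List.pairwise_lt_finRange n).filter _).imp_of_mem ?_)
    intro x y hx hy hxy
    exact hmono (by simpa using (List.mem_filter.1 hx).2)
      (by simpa using (List.mem_filter.1 hy).2) hxy
  · simp only [List.mem_map, List.mem_filter, List.mem_finRange, true_and, Function.comp_apply]
    exact ⟨fun ⟨y, hy, hyx⟩ => hyx ▸ hy, fun hx => ⟨swap a b x, by simpa using hx, by simp⟩⟩

section Words

variable {r n : ℕ}

theorem mem_wordPairs_map_fst (w : GW r n) (k : ℕ) (x : Fin n) :
    (x : ℕ) + 1 ∈ (wordPairs w k).map Prod.fst ↔ (w.a (w.σ⁻¹ x)).val = k := by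
  simp only [wordPairs, labelIdx, List.map_map, List.mem_map, List.mem_filter,
    List.mem_finRange, true_and, decide_eq_true_eq, Function.comp_apply, add_left_inj]
  constructor
  · rintro ⟨i, hi, hix⟩
    rw [← Fin.ext hix]
    simpa using hi
  · exact fun hx => ⟨w.σ⁻¹ x, hx, by simp⟩

theorem wordPairs_Rop_map_fst [NeZero r] (w : GW r n) (j : ℕ) (h1 : 1 ≤ j) (h2 : j + 1 ≤ n)
    (hadm : RightAdm w j h1 h2) (k : ℕ) :
    (wordPairs (Rop w j h1 h2) k).map Prod.fst = (wordPairs w k).map Prod.fst := by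
  have hcov : (⟨j - 1, by omega⟩ : Fin n) ⋖ ⟨j, by omega⟩ := by
    rw [Fin.covBy_iff, Nat.covBy_iff_add_one_eq]
    exact Nat.sub_add_cancel h1
  have hsep : ¬(decide ((w.a ⟨j - 1, by omega⟩).val = k) ∧
      decide ((w.a ⟨j, by omega⟩).val = k)) := by
    simp only [decide_eq_true_eq]
    exact fun ⟨h, h'⟩ => hadm (ZMod.val_injective r (h.trans h'.symm))
  have ha : (Rop w j h1 h2).a = w.a ∘ swap ⟨j - 1, by omega⟩ ⟨j, by omega⟩ :=
    funext fun i => by simp [Rop, sEl]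
  simp only [wordPairs, labelIdx, List.map_map, ha]
  rw [← map_swap_filter_finRange (p := fun i => decide ((w.a i).val = k)) hcov hsep,
    List.map_map]
  rfl

theorem wordPairs_Lop (w : GW r n) (j : ℕ) (h1 : 1 ≤ j) (h2 : j + 1 ≤ n) (k : ℕ) :
    wordPairs (Lop w j h1 h2) k = (wordPairs w k).map (Prod.map (swap j (j + 1)) id) := by
  have hsucc : Function.Injective fun v : Fin n => (v : ℕ) + 1 :=
    fun u v h => Fin.ext (Nat.add_right_cancel h)
  have hswap := hsucc.swap_apply (⟨j - 1, by omega⟩ : Fin n) ⟨j, by omega⟩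
  simp only [Nat.sub_add_cancel h1] at hswap
  have ha : (Lop w j h1 h2).a = w.a := funext fun i => by simp [Lop, sEl]
  simp only [wordPairs, labelIdx, List.map_map, ha]
  refine List.map_congr_left fun i _ => ?_
  simp [Lop, sEl, hswap]

theorem strictMonoOn_swap_wordPairs [NeZero r] (w : GW r n) (j : ℕ) (h1 : 1 ≤ j)
    (h2 : j + 1 ≤ n) (hadm : LeftAdm w j h1 h2) (k : ℕ) :
    StrictMonoOn (swap j (j + 1)) {x | x ∈ (wordPairs w k).map Prod.fst} := by
  refine strictMonoOn_swap_of_covBy (Order.covBy_add_one j) fun ⟨hj, hj1⟩ => hadm ?_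
  have hj' := (mem_wordPairs_map_fst w k ⟨j - 1, by omega⟩).1
    (by simpa [Nat.sub_add_cancel h1] using hj)
  have hj1' := (mem_wordPairs_map_fst w k ⟨j, by omega⟩).1 hj1
  exact ZMod.val_injective r (hj'.trans hj1'.symm)

end Words

theorem Ptab_Rop_and_Qtab_Lop_general (r n : ℕ) (w : GW r n) (j : ℕ) (h1 : 1 ≤ j) (h2 : j + 1 ≤ n) :
    (RightAdm w j h1 h2 → Ptab (Rop w j h1 h2) = Ptab w) ∧
      (LeftAdm w j h1 h2 → Qtab (Lop w j h1 h2) = Qtab w) := by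
  refine ⟨fun hadm => funext fun k => ?_, fun hadm => funext fun k => ?_⟩
  -- `k : Fin r` forces `r ≠ 0`; in `ZMod 0 = ℤ` exponents are not determined by their `val`
  all_goals have : NeZero r := NeZero.of_pos k.pos
  · exact RSword_fst_congr (wordPairs_Rop_map_fst w j h1 h2 hadm k)
  · rw [Qtab, Qtab, wordPairs_Lop,
      RSword_map_of_strictMonoOn (strictMonoOn_swap_wordPairs w j h1 h2 hadm k)]
    rfl

/-- **Proposition.** For `w ∈ W_n`: if `R_j` is right admissible for `w` then
`P (R_j w) = P w`, and if `L_j` is left admissible for `w` then `Q (L_j w) = Q w`. -/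
theorem Ptab_Rop_and_Qtab_Lop (r n : ℕ) (hr : 1 ≤ r) (hn : 1 ≤ n)
    (w : GW r n) (j : ℕ) (h1 : 1 ≤ j) (h2 : j + 1 ≤ n) :
    (RightAdm w j h1 h2 → Ptab (Rop w j h1 h2) = Ptab w) ∧
      (LeftAdm w j h1 h2 → Qtab (Lop w j h1 h2) = Qtab w) :=
  Ptab_Rop_and_Qtab_Lop_general r n w j h1 h2
end

section
/- Let w ∈ W_n and suppose R_i is right admissible for w. Then the boxes labeled i and i+1 lie in different component tableaux of Q(w), and Q(R_i(w)) is the standard multitableau obtained from Q(w) by interchanging the labels i and i+1. -/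
open scoped BigOperators

/-!
Right multiplication by `s_j` permutes the columns `j` and `j + 1` of `w`. Since `a_j ≠ a_{j+1}`,
these two columns feed different words `w^(k)`, so each word `w^(k)` keeps its values in the same
order and only its recording labels change, by the transposition of `j` and `j + 1`. Row insertion
never looks at the labels, hence the recording tableaux undergo the same relabeling.
-/

section Relabel

variable (f : ℕ → ℕ)

lemma place_map_labels (Q : Tab) (i lab : ℕ) :
    place (Q.map (List.map f)) i (f lab) = (place Q i lab).map (List.map f) := by
  unfold place
  by_cases h : i < Q.length
  · simp [h, List.map_set]
  · simp [h]

lemma RSstep_map_labels (PQ : Tab × Tab) (xl : ℕ × ℕ) :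
    RSstep (Prod.map id (List.map (List.map f)) PQ) (Prod.map id f xl) =
      Prod.map id (List.map (List.map f)) (RSstep PQ xl) := by
  simp only [RSstep, Prod.map_fst, Prod.map_snd, id, place_map_labels, Prod.map_apply]

theorem RSword_map_labels (word : List (ℕ × ℕ)) :
    (RSword (word.map (Prod.map id f))).2 = (RSword word).2.map (List.map f) := by
  unfold RSword
  rw [List.foldl_map]
  exact congrArg Prod.snd (List.foldl_hom (init := (([] : Tab), ([] : Tab)))
    (Prod.map id (List.map (List.map f))) (g₁ := RSstep) (RSstep_map_labels f))

end Relabel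

section Labels

lemma mem_flatten_place {Q : Tab} {i lab x : ℕ} :
    x ∈ (place Q i lab).flatten ↔ x = lab ∨ x ∈ Q.flatten := by
  unfold place
  split_ifs with h
  · have hQ : Q = Q.take i ++ Q[i] :: Q.drop (i + 1) := by
      rw [List.getElem_cons_drop, List.take_append_drop]
    rw [List.set_eq_take_append_cons_drop, if_pos h, List.getD_eq_getElem _ _ h]
    conv_rhs => rw [hQ]
    simp only [List.flatten_append, List.flatten_cons, List.mem_append, List.mem_singleton]
    tauto
  · simp only [List.flatten_append, List.mem_append, List.flatten_cons, List.flatten_nil,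
      List.append_nil, List.mem_singleton]
    tauto

lemma mem_flatten_foldl_RSstep {x : ℕ} (word : List (ℕ × ℕ)) (PQ : Tab × Tab) :
    x ∈ (word.foldl RSstep PQ).2.flatten ↔ x ∈ PQ.2.flatten ∨ x ∈ word.map Prod.snd := by
  induction word generalizing PQ with
  | nil => simp
  | cons xl word ih =>
    rw [List.foldl_cons, ih, RSstep, mem_flatten_place]
    simp only [List.map_cons, List.mem_cons]
    tauto

theorem mem_flatten_RSword_snd {x : ℕ} (word : List (ℕ × ℕ)) :
    x ∈ (RSword word).2.flatten ↔ x ∈ word.map Prod.snd := by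
  rw [RSword, mem_flatten_foldl_RSstep]
  simp

theorem mem_labels_Qtab {r n : ℕ} (w : GW r n) (k : Fin r) (x : ℕ) :
    x ∈ labels (Qtab w k) ↔ ∃ i : Fin n, (w.a i).val = k ∧ (i : ℕ) + 1 = x := by
  rw [labels, List.mem_toFinset, Qtab, mem_flatten_RSword_snd]
  simp [wordPairs, labelIdx]

end Labels

section AdjacentSwap

variable {α : Type*}

lemma List.filter_append_cons_cons_comm (P : α → Bool) (l₁ l₂ : List α) {p q : α}
    (h : ¬(P p ∧ P q)) :
    (l₁ ++ q :: p :: l₂).filter P = (l₁ ++ p :: q :: l₂).filter P := by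
  cases hp : P p <;> cases hq : P q <;> simp_all

lemma List.map_swap_append_cons_cons [DecidableEq α] {l₁ l₂ : List α} {p q : α}
    (h : (l₁ ++ p :: q :: l₂).Nodup) :
    (l₁ ++ p :: q :: l₂).map (Equiv.swap p q) = l₁ ++ q :: p :: l₂ := by
  have fixed : ∀ l : List α, (∀ x ∈ l, x ≠ p ∧ x ≠ q) → l.map (Equiv.swap p q) = l :=
    fun l hl => (List.map_congr_left (g := id) fun x hx =>
      Equiv.swap_apply_of_ne_of_ne (hl x hx).1 (hl x hx).2).trans (List.map_id l)
  simp only [List.nodup_append, List.nodup_cons, List.mem_cons] at h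
  rw [List.map_append, List.map_cons, List.map_cons, Equiv.swap_apply_left,
    Equiv.swap_apply_right, fixed l₁, fixed l₂] <;> grind

theorem List.filter_map_swap_of_adjacent [DecidableEq α] (P : α → Bool) {l₁ l₂ : List α}
    {p q : α} (hl : (l₁ ++ p :: q :: l₂).Nodup) (hP : ¬(P p ∧ P q)) :
    ((l₁ ++ p :: q :: l₂).map (Equiv.swap p q)).filter P = (l₁ ++ p :: q :: l₂).filter P := by
  rw [List.map_swap_append_cons_cons hl, List.filter_append_cons_cons_comm P _ _ hP]

lemma List.finRange_eq_append_cons_cons {n : ℕ} {p q : Fin n} (hpq : (q : ℕ) = p + 1) :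
    ∃ l₁ l₂, List.finRange n = l₁ ++ p :: q :: l₂ := by
  refine ⟨(List.finRange n).take p, (List.finRange n).drop (p + 2), ?_⟩
  conv_lhs => rw [← List.take_append_drop p (List.finRange n),
    List.drop_eq_getElem_cons (by simp), List.drop_eq_getElem_cons (by simp; omega)]
  simp [Fin.ext_iff, hpq]

end AdjacentSwap

section RightSwap

variable {r n : ℕ} [NeZero r] (w : GW r n) {p q : Fin n}

lemma labelIdx_mul_swap (hpq : (q : ℕ) = p + 1) (ha : w.a p ≠ w.a q) (k : ℕ) :
    labelIdx (w * ⟨fun _ => 0, Equiv.swap p q⟩) k = (labelIdx w k).map (Equiv.swap p q) := by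
  set P : Fin n → Bool := fun i => (w.a i).val = k
  have hP : ¬((P ∘ Equiv.swap p q) p ∧ (P ∘ Equiv.swap p q) q) := by
    simp only [P, Function.comp_apply, Equiv.swap_apply_left, Equiv.swap_apply_right,
      decide_eq_true_eq]
    exact fun h => ha (ZMod.val_injective r (h.2.trans h.1.symm))
  obtain ⟨l₁, l₂, hl⟩ := List.finRange_eq_append_cons_cons hpq
  calc labelIdx (w * ⟨fun _ => 0, Equiv.swap p q⟩) k
      = (List.finRange n).filter (P ∘ Equiv.swap p q) := by
        simp only [labelIdx, GW.mul_a, add_zero]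
        rfl
    _ = ((List.finRange n).map (Equiv.swap p q)).filter (P ∘ Equiv.swap p q) := by
        rw [hl]
        exact (List.filter_map_swap_of_adjacent _ (hl ▸ List.nodup_finRange n) hP).symm
    _ = ((List.finRange n).filter P).map (Equiv.swap p q) := by
        simp only [List.filter_map, Function.comp_def, Equiv.swap_apply_self]

lemma wordPairs_mul_swap (hpq : (q : ℕ) = p + 1) (ha : w.a p ≠ w.a q) (k : ℕ) :
    wordPairs (w * ⟨fun _ => 0, Equiv.swap p q⟩) k =
      (wordPairs w k).map (Prod.map id (Equiv.swap ((p : ℕ) + 1) ((q : ℕ) + 1))) := by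
  have hsucc : Function.Injective fun i : Fin n => (i : ℕ) + 1 :=
    Nat.succ_injective.comp Fin.val_injective
  unfold wordPairs
  rw [labelIdx_mul_swap w hpq ha, List.map_map, List.map_map]
  refine List.map_congr_left fun i _ => ?_
  simp [hsucc.swap_apply]

theorem Qtab_mul_swap (hpq : (q : ℕ) = p + 1) (ha : w.a p ≠ w.a q) (k : Fin r) :
    Qtab (w * ⟨fun _ => 0, Equiv.swap p q⟩) k =
      (Qtab w k).map (List.map (Equiv.swap ((p : ℕ) + 1) ((q : ℕ) + 1))) := by
  rw [Qtab, Qtab, wordPairs_mul_swap w hpq ha, RSword_map_labels]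

end RightSwap

theorem Qtab_Rop_eq_swap_labels_general (r n : ℕ) (hr : 1 ≤ r)
    (w : GW r n) (j : ℕ) (h1 : 1 ≤ j) (h2 : j + 1 ≤ n)
    (ha : RightAdm w j h1 h2) :
    (∃ k l : Fin r, k ≠ l ∧ j ∈ labels (Qtab w k) ∧ j + 1 ∈ labels (Qtab w l)) ∧
      Qtab (Rop w j h1 h2) = fun k =>
        (Qtab w k).map (List.map fun x =>
          if x = j then j + 1 else if x = j + 1 then j else x) := by
  have : NeZero r := ⟨by omega⟩
  set p : Fin n := ⟨j - 1, by omega⟩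
  set q : Fin n := ⟨j, by omega⟩
  have hpq : (q : ℕ) = p + 1 := by simp [p, q]; omega
  have hswap : (fun x => if x = j then j + 1 else if x = j + 1 then j else x) =
      Equiv.swap ((p : ℕ) + 1) ((q : ℕ) + 1) := by
    funext x
    rw [Equiv.swap_apply_def, ← hpq]
  refine ⟨⟨⟨(w.a p).val, ZMod.val_lt _⟩, ⟨(w.a q).val, ZMod.val_lt _⟩, ?_, ?_, ?_⟩, ?_⟩
  · exact fun h => ha (ZMod.val_injective r (Fin.ext_iff.mp h))
  · exact (mem_labels_Qtab w _ j).2 ⟨p, rfl, by simp only [p]; omega⟩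
  · exact (mem_labels_Qtab w _ (j + 1)).2 ⟨q, rfl, rfl⟩
  · funext k
    rw [hswap]
    exact Qtab_mul_swap w hpq ha k

/-- If `R_j` is right admissible for `w`, then the boxes labeled `j` and `j + 1`
lie in different component tableaux of `Q w`, and `Q (R_j w)` is obtained from
`Q w` by interchanging the labels `j` and `j + 1`. -/
theorem Qtab_Rop_eq_swap_labels (r n : ℕ) (hr : 1 ≤ r) (hn : 1 ≤ n)
    (w : GW r n) (j : ℕ) (h1 : 1 ≤ j) (h2 : j + 1 ≤ n)
    (ha : RightAdm w j h1 h2) :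
    (∃ k l : Fin r, k ≠ l ∧ j ∈ labels (Qtab w k) ∧ j + 1 ∈ labels (Qtab w l)) ∧
      Qtab (Rop w j h1 h2) = fun k =>
        (Qtab w k).map (List.map fun x =>
          if x = j then j + 1 else if x = j + 1 then j else x) :=
  Qtab_Rop_eq_swap_labels_general r n hr w j h1 h2 ha
end
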